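/- For every ε > 0 and every integer n ≥ 1, one has Σ_{k=1}^{n} P( |S_k| < ε ) · P( τ_{2ε} > n − k ) ≤ 1, with the convention P(τ_{2ε} > 0) = 1. (Indeed, the events A_k = { |S_k| < ε and |S_p − S_k| > 2ε for all p = k+1,…,n } are pairwise disjoint, and P(A_k) ≥ P(|S_k| < ε) P(τ_{2ε} > n−k) by independence and stationarity of the increments.) -/

import Mathlib

open MeasureTheory ProbabilityTheory Filter Real
open scoped ENNReal NNReal

/-!
Let `A k` be the event that the walk is within `ε` of the origin at time `k` and that its
increments after time `k` stay at distance at least `2ε` from `0` up to time `n`. Two such events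
are disjoint, since at two visits `k < l` of the `ε`-ball, `|S l - S k| < 2ε`. The event `A k` is
an intersection of an event about `X 0, …, X (k-1)` and the event `{τ_{2ε} > n - k}` for the walk
restarted at time `k`; the two are independent, and the restarted walk has the law of the original
one, so `P (A k)` is the `k`-th summand.
-/

open Finset

section Walk

variable {E : Type*} [NormedAddCommGroup E]

def walkAvoidsBall (j : ℕ) (r : ℝ) : Set (ℕ → E) :=
  {y | ∀ m, 1 ≤ m → m ≤ j → r ≤ ‖∑ i ∈ range m, y i‖}

/-- The event `A k` of the paper, as a set of step sequences. -/
def lastVisitSet (ε : ℝ) (n k : ℕ) : Set (ℕ → E) :=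
  {x | ‖∑ i ∈ range k, x i‖ < ε} ∩ (fun x i ↦ x (k + i)) ⁻¹' walkAvoidsBall (n - k) (2 * ε)

lemma disjoint_lastVisitSet {ε : ℝ} {n k l : ℕ} (hkl : k < l) (hl : l ≤ n) :
    Disjoint (lastVisitSet (E := E) ε n k) (lastVisitSet ε n l) := by
  refine Set.disjoint_left.2 fun x ⟨hk, hfar⟩ ⟨hl', _⟩ ↦ ?_
  have hgap := hfar (l - k) (by omega) (by omega)
  have hincr : ∑ i ∈ range (l - k), x (k + i) = ∑ i ∈ range l, x i - ∑ i ∈ range k, x i := by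
    rw [eq_sub_iff_add_eq', ← sum_range_add, Nat.add_sub_cancel' hkl.le]
  rw [hincr] at hgap
  rw [Set.mem_ofPred_eq] at hk hl'
  linarith [norm_sub_le (∑ i ∈ range l, x i) (∑ i ∈ range k, x i)]

lemma pairwiseDisjoint_lastVisitSet (ε : ℝ) (n : ℕ) :
    (Set.Iic n).PairwiseDisjoint (lastVisitSet (E := E) ε n) := by
  intro k hk l hl hne
  rcases hne.lt_or_gt with hkl | hlk
  · exact disjoint_lastVisitSet hkl hl
  · exact (disjoint_lastVisitSet hlk hk).symm

variable [MeasurableSpace E] [OpensMeasurableSpace E] [MeasurableAdd₂ E]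

lemma measurableSet_walkAvoidsBall (j : ℕ) (r : ℝ) :
    MeasurableSet (walkAvoidsBall (E := E) j r) := by
  simp only [walkAvoidsBall, Set.ofPred_forall]
  exact .iInter fun m ↦ .iInter fun _ ↦ .iInter fun _ ↦ measurableSet_le measurable_const
    (Finset.measurable_sum _ fun i _ ↦ measurable_pi_apply i).norm

lemma measurableSet_lastVisitSet (ε : ℝ) (n k : ℕ) :
    MeasurableSet (lastVisitSet (E := E) ε n k) :=
  (measurableSet_lt (Finset.measurable_sum _ fun i _ ↦ measurable_pi_apply i).norm
    measurable_const).inter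
    ((measurable_pi_lambda _ fun i ↦ measurable_pi_apply (k + i))
      (measurableSet_walkAvoidsBall _ _))

end Walk

namespace ProbabilityTheory

variable {Ω E : Type*} [MeasurableSpace Ω] [MeasurableSpace E] {P : Measure Ω} {X : ℕ → Ω → E}

lemma iIndepFun.identDistrib_shift [IsProbabilityMeasure P] (hX : ∀ n, Measurable (X n))
    (hindep : iIndepFun X P) (hident : ∀ n, P.map (X n) = P.map (X 0)) (k : ℕ) :
    IdentDistrib (fun ω i ↦ X (k + i) ω) (fun ω i ↦ X i ω) P P where
  aemeasurable_fst := (measurable_pi_lambda _ fun i ↦ hX (k + i)).aemeasurable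
  aemeasurable_snd := (measurable_pi_lambda _ hX).aemeasurable
  map_eq := by
    rw [(hindep.precomp (add_right_injective k)).map_fun_eq_infinitePi_map fun i ↦ hX (k + i),
      hindep.map_fun_eq_infinitePi_map hX]
    simp only [hident]

lemma iIndepFun.indepFun_sum_range_shift [AddCommMonoid E] [MeasurableAdd₂ E]
    (hX : ∀ n, Measurable (X n)) (hindep : iIndepFun X P) (k : ℕ) :
    IndepFun (fun ω ↦ ∑ i ∈ range k, X i ω) (fun ω i ↦ X (k + i) ω) P := by
  let past := ⨆ i ∈ Set.Iio k, MeasurableSpace.comap (X i) inferInstance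
  let future := ⨆ i ∈ Set.Ici k, MeasurableSpace.comap (X i) inferInstance
  have hpast_future : Indep past future P :=
    indep_iSup_of_disjoint (fun i ↦ (hX i).comap_le) hindep.iIndep
      (Set.disjoint_left.2 fun i (hi : i < k) (hi' : k ≤ i) ↦ by omega)
  have hsum : Measurable[past] (fun ω ↦ ∑ i ∈ range k, X i ω) :=
    Finset.measurable_sum _ fun i hi ↦ (comap_measurable (X i)).mono
      (le_iSup₂ (f := fun i (_ : i ∈ Set.Iio k) ↦ MeasurableSpace.comap (X i) inferInstance)
        i (mem_range.1 hi)) le_rfl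
  have hshift : Measurable[future] (fun ω i ↦ X (k + i) ω) :=
    measurable_pi_lambda _ fun i ↦ (comap_measurable (X (k + i))).mono
      (le_iSup₂ (f := fun i (_ : i ∈ Set.Ici k) ↦ MeasurableSpace.comap (X i) inferInstance)
        (k + i) (Nat.le_add_right k i)) le_rfl
  exact (IndepFun_iff_Indep _ _ _).2
    (indep_of_indep_of_le hpast_future hsum.comap_le hshift.comap_le)

lemma iIndepFun.measure_lastVisitSet [NormedAddCommGroup E] [OpensMeasurableSpace E]
    [MeasurableAdd₂ E] [IsProbabilityMeasure P] (hX : ∀ n, Measurable (X n))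
    (hindep : iIndepFun X P)
    (hident : ∀ n, P.map (X n) = P.map (X 0)) (ε : ℝ) (n k : ℕ) :
    P ((fun ω i ↦ X i ω) ⁻¹' lastVisitSet ε n k) =
      P {ω | ‖∑ i ∈ range k, X i ω‖ < ε} *
        P {ω | ∀ m, 1 ≤ m → m ≤ n - k → 2 * ε ≤ ‖∑ i ∈ range m, X i ω‖} := by
  have hW := measurableSet_walkAvoidsBall (E := E) (n - k) (2 * ε)
  exact ((hindep.indepFun_sum_range_shift hX k).measure_inter_preimage_eq_mul _ _
    (measurableSet_lt measurable_norm measurable_const) hW).trans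
    (congrArg (_ * ·) ((hindep.identDistrib_shift hX hident k).measure_mem_eq hW))

end ProbabilityTheory

theorem random_walk_last_visit_decomposition_general
    {Ω : Type*} [MeasurableSpace Ω] (P : Measure Ω) [IsProbabilityMeasure P]
    (X : ℕ → Ω → EuclideanSpace ℝ (Fin 2))
    (hXmeas : ∀ n, Measurable (X n))
    (hindep : iIndepFun X P)
    (hident : ∀ n, P.map (X n) = P.map (X 0))
    (S : ℕ → Ω → EuclideanSpace ℝ (Fin 2))
    (hS : ∀ n ω, S n ω = ∑ k ∈ Finset.range n, X k ω)
    (ε : ℝ) (n : ℕ) :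
    ∑ k ∈ Finset.Icc 1 n,
        (P {ω | ‖S k ω‖ < ε}).toReal *
          (P {ω | ∀ m : ℕ, 1 ≤ m → m ≤ n - k → 2 * ε ≤ ‖S m ω‖}).toReal ≤ 1 := by
  obtain rfl : S = fun n ω ↦ ∑ k ∈ range n, X k ω := funext fun n ↦ funext (hS n)
  have hdisj : (Icc 1 n : Set ℕ).PairwiseDisjoint
      fun k ↦ (fun ω i ↦ X i ω) ⁻¹' lastVisitSet ε n k :=
    fun k hk l hl hkl ↦
      (pairwiseDisjoint_lastVisitSet ε n (mem_Icc.1 hk).2 (mem_Icc.1 hl).2 hkl).preimage _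
  calc ∑ k ∈ Icc 1 n, (P {ω | ‖∑ i ∈ range k, X i ω‖ < ε}).toReal *
        (P {ω | ∀ m, 1 ≤ m → m ≤ n - k → 2 * ε ≤ ‖∑ i ∈ range m, X i ω‖}).toReal
      = (P (⋃ k ∈ Icc 1 n, (fun ω i ↦ X i ω) ⁻¹' lastVisitSet ε n k)).toReal := by
        rw [measure_biUnion_finset hdisj fun k _ ↦ (measurable_pi_lambda _ hXmeas)
          (measurableSet_lastVisitSet ε n k), ENNReal.toReal_sum fun k _ ↦ measure_ne_top P _]
        simp only [hindep.measure_lastVisitSet hXmeas hident, ENNReal.toReal_mul]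
    _ ≤ 1 := measureReal_le_one

/-- Let `S n = X 1 + ⋯ + X n` be a planar random walk with i.i.d. steps and let
`τ_{2ε} = min {m ≥ 1 : |S m| < 2ε}`.  For every `ε > 0` and `n ≥ 1`,
`Σ_{k=1}^n P(|S k| < ε) · P(τ_{2ε} > n − k) ≤ 1`, where the event `{τ_{2ε} > j}` is written
as "no return `m ∈ [1, j]` with `|S m| < 2ε`", which for `j = 0` is the sure event (the
convention `P(τ_{2ε} > 0) = 1`). -/
theorem random_walk_last_visit_decomposition
    {Ω : Type*} [MeasurableSpace Ω] (P : Measure Ω) [IsProbabilityMeasure P]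
    (X : ℕ → Ω → EuclideanSpace ℝ (Fin 2))
    (hXmeas : ∀ n, Measurable (X n))
    (hindep : iIndepFun X P)
    (hident : ∀ n, P.map (X n) = P.map (X 0))
    (S : ℕ → Ω → EuclideanSpace ℝ (Fin 2))
    (hS : ∀ n ω, S n ω = ∑ k ∈ Finset.range n, X k ω)
    (ε : ℝ) (hε : 0 < ε) (n : ℕ) (hn : 1 ≤ n) :
    ∑ k ∈ Finset.Icc 1 n,
        (P {ω | ‖S k ω‖ < ε}).toReal *
          (P {ω | ∀ m : ℕ, 1 ≤ m → m ≤ n - k → 2 * ε ≤ ‖S m ω‖}).toReal ≤ 1 :=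
  random_walk_last_visit_decomposition_general P X hXmeas hindep hident S hS ε n
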